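/- For any object j of a category C, the full subcategory of the comma category (j ↓ s) (where s : Tw(C)^op → C is the source functor) consisting of objects whose first arrow is the identity of j (i.e. arrows of the form id_j followed by j → b) is a coreflective subcategory: the inclusion has a right adjoint. Moreover this subcategory has a terminal object, namely the object corresponding to the identity arrow j = j = j. -/

import Mathlib

/-!
STATEMENT 2: For any object `j` of a category `C`, the full subcategory of
the comma category `(j ↓ s)` (where `s : Tw(C)ᵒᵖ ⥤ C` is the source functor)
on objects whose first arrow is the identity of `j` is coreflective: the
inclusion has a right adjoint.  Moreover this subcategory has a terminal
object, namely the object corresponding to the identity arrow `j = j = j`.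
-/

open CategoryTheory Simplicial CategoryTheory.Limits

universe v u

/-- The opposite of the twisted arrow category of `C`: objects are arrows of
`C`; a morphism from `(a → b)` to `(c → d)` is a pair `u : a → c`, `v : d → b`
with `u ≫ (c → d) ≫ v = (a → b)`. -/
structure TwOp (C : Type u) [Category.{v} C] : Type max u v where
  left : C
  right : C
  hom : left ⟶ right

instance (C : Type u) [Category.{v} C] : Category (TwOp C) where
  Hom A B := { p : (A.left ⟶ B.left) × (B.right ⟶ A.right) //
    p.1 ≫ B.hom ≫ p.2 = A.hom }
  id A := ⟨(𝟙 _, 𝟙 _), by simp⟩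
  comp f g := ⟨(f.val.1 ≫ g.val.1, g.val.2 ≫ f.val.2), by
    dsimp only
    slice_lhs 2 4 => rw [g.property]
    simpa using f.property⟩
  id_comp f := by apply Subtype.ext; simp
  comp_id f := by apply Subtype.ext; simp
  assoc f g h := by apply Subtype.ext; simp

/-- The source functor `Tw(C)ᵒᵖ ⥤ C`, remembering the source of an arrow. -/
def TwOp.src (C : Type u) [Category.{v} C] : TwOp C ⥤ C where
  obj A := A.left
  map f := f.val.1


variable {C : Type u} [Category.{v} C]

/-- The predicate selecting the objects of `(j ↓ s)` whose first arrow is the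
identity of `j`, i.e. those of the form `id_j` followed by `j → b`. -/
def IdFirst (j : C) (Z : StructuredArrow j (TwOp.src C)) : Prop :=
  Z.right.left = j ∧ HEq Z.hom (𝟙 j)

/-- The object of the subcategory corresponding to `j = j = j`. -/
def idObj (j : C) : ObjectProperty.FullSubcategory (IdFirst j) :=
  ⟨StructuredArrow.mk (Y := TwOp.mk j j (𝟙 j)) (𝟙 j), rfl, HEq.rfl⟩

/-!
The coreflection of `(f : j ⟶ a, g : a ⟶ b)` is `(𝟙 j, f ≫ g)`, with counit `(f, 𝟙 b)`.
In a morphism out of an object `(𝟙 j, h)` of the subcategory, the first component is forced to be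
the structure arrow of the target, so the morphism is just a `v` with `f ≫ g ≫ v = h`. Such `v`
correspond exactly to morphisms `(𝟙 j, h) ⟶ (𝟙 j, f ≫ g)`, which is the universal property of the
counit; for the target `(𝟙 j, 𝟙 j)` the condition reads `v = h`, so that object is terminal.
-/

theorem CategoryTheory.Functor.isLeftAdjoint_of_bijective_comp_counit {D : Type*} {E : Type*}
    [Category D] [Category E] {F : D ⥤ E} (G : E → D) (ε : ∀ Y, F.obj (G Y) ⟶ Y)
    (h : ∀ X Y, Function.Bijective fun f : X ⟶ G Y => F.map f ≫ ε Y) : F.IsLeftAdjoint :=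
  let e X Y := (Equiv.ofBijective _ (h X Y)).symm
  (Adjunction.adjunctionOfEquivRight (G_obj := G) e fun _ _ _ f g => by
    rw [Equiv.symm_apply_eq]
    simp [e, Equiv.ofBijective_apply_symm_apply _ (h _ _) g]).isLeftAdjoint

namespace TwOp

@[ext]
lemma hom_ext {A B : TwOp C} {f g : A ⟶ B} (h₁ : f.val.1 = g.val.1) (h₂ : f.val.2 = g.val.2) :
    f = g :=
  Subtype.ext (Prod.ext h₁ h₂)

end TwOp

namespace IdFirst

variable {j : C}

variable (j) in
def mk {b : C} (g : j ⟶ b) : ObjectProperty.FullSubcategory (IdFirst j) :=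
  ⟨StructuredArrow.mk (Y := TwOp.mk j b g) (𝟙 j), rfl, HEq.rfl⟩

@[elab_as_elim]
lemma ind {motive : ObjectProperty.FullSubcategory (IdFirst j) → Prop}
    (mk : ∀ {b : C} (g : j ⟶ b), motive (mk j g))
    (A : ObjectProperty.FullSubcategory (IdFirst j)) : motive A := by
  obtain ⟨⟨⟨⟩, ⟨a, b, g⟩, f⟩, rfl : a = j, hf⟩ := A
  obtain rfl := eq_of_heq hf
  exact mk g

/- `(TwOp.src C).obj Z.right` is not reducibly `Z.right.left`, so `simp` cannot rewrite composites
with `Z.hom`; equations below are closed by explicit terms, checked up to defeq. -/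

section

variable {b : C} {g : j ⟶ b} {Z : StructuredArrow j (TwOp.src C)}

lemma mk_hom_fst (φ : (mk j g).obj ⟶ Z) : φ.right.val.1 = Z.hom :=
  (Category.id_comp _).symm.trans (StructuredArrow.w φ)

lemma mk_hom_w (φ : (mk j g).obj ⟶ Z) : Z.hom ≫ Z.right.hom ≫ φ.right.val.2 = g :=
  mk_hom_fst φ ▸ φ.right.property

lemma mk_hom_ext {φ ψ : (mk j g).obj ⟶ Z} (h : φ.right.val.2 = ψ.right.val.2) : φ = ψ := by
  ext
  · rw [mk_hom_fst, mk_hom_fst]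
  · exact h

end

def coreflection (Z : StructuredArrow j (TwOp.src C)) :
    ObjectProperty.FullSubcategory (IdFirst j) :=
  mk j (Z.hom ≫ Z.right.hom)

def coreflectionCounit (Z : StructuredArrow j (TwOp.src C)) : (coreflection Z).obj ⟶ Z :=
  StructuredArrow.homMk ⟨(Z.hom, 𝟙 _), congrArg (Z.hom ≫ ·) (Category.comp_id _)⟩
    (Category.id_comp _)

lemma comp_coreflectionCounit_snd {Z : StructuredArrow j (TwOp.src C)}
    {A : StructuredArrow j (TwOp.src C)} (ψ : A ⟶ (coreflection Z).obj) :
    (ψ ≫ coreflectionCounit Z).right.val.2 = ψ.right.val.2 :=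
  Category.id_comp _

lemma bijective_comp_coreflectionCounit (A : ObjectProperty.FullSubcategory (IdFirst j))
    (Z : StructuredArrow j (TwOp.src C)) :
    Function.Bijective fun ψ : A ⟶ coreflection Z => ψ.hom ≫ coreflectionCounit Z := by
  induction A using ind with | mk g => ?_
  refine ⟨fun ψ ψ' hψ => ObjectProperty.hom_ext _ (mk_hom_ext ?_), fun φ => ?_⟩
  · have hsnd := congrArg (fun φ => φ.right.val.2) hψ
    simp only [comp_coreflectionCounit_snd] at hsnd
    exact hsnd
  · refine ⟨ObjectProperty.homMk (StructuredArrow.homMk ⟨(𝟙 j, φ.right.val.2), ?_⟩ ?_), ?_⟩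
    · exact (Category.id_comp _).trans ((Category.assoc _ _ _).trans (mk_hom_w φ))
    · exact Category.id_comp _
    · exact mk_hom_ext (comp_coreflectionCounit_snd _)

variable (j) in
lemma nonempty_isTerminal_idObj : Nonempty (IsTerminal (idObj j)) := by
  have hunique (A : ObjectProperty.FullSubcategory (IdFirst j)) :
      Nonempty (Unique (A ⟶ mk j (𝟙 j))) := by
    induction A using ind with | mk g => ?_
    refine ⟨⟨⟨ObjectProperty.homMk (StructuredArrow.homMk ⟨(𝟙 j, g), ?_⟩ ?_)⟩, fun φ => ?_⟩⟩
    · exact (Category.id_comp _).trans (Category.id_comp g)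
    · exact Category.id_comp _
    · refine ObjectProperty.hom_ext _ (mk_hom_ext ?_)
      exact (Category.id_comp _).symm.trans ((Category.id_comp _).symm.trans (mk_hom_w φ.hom))
  exact ⟨@IsTerminal.ofUnique _ _ _ fun A => (hunique A).some⟩

end IdFirst

theorem idFirst_subcategory_coreflective_with_terminal (j : C) :
    (ObjectProperty.ι (IdFirst j)).IsLeftAdjoint ∧
      Nonempty (Limits.IsTerminal (idObj j)) :=
  ⟨Functor.isLeftAdjoint_of_bijective_comp_counit IdFirst.coreflection
      IdFirst.coreflectionCounit IdFirst.bijective_comp_coreflectionCounit,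
    IdFirst.nonempty_isTerminal_idObj j⟩
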